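/- arXiv:2102.02801 — 4 statements merged into one kernel-verified Lean document; each statement's English description precedes it below -/
import Mathlib

section
/- There exists an absolute constant c > 0 such that for every finite Abelian group G with |G| ≥ 2, every integer k ≥ 1 and every tuple z ∈ G^k, the relaxation time of the simple random walk on the undirected Cayley multigraph G^−(z) satisfies t_rel(G^−(z)) ≥ c·|G|^{2/k}; equivalently, the spectral gap satisfies 1 − lambda_2 ≤ c^{−1}·|G|^{−2/k}. In particular also t_rel^*(G^−(z)) ≥ t_rel(G^−(z)) ≥ c·|G|^{2/k}. -/
/-- Transition matrix of the simple random walk on the undirected Cayley multigraph of the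
finite additive Abelian group `G` with generator tuple `z`:
`P(x,y) = (2k)⁻¹·(#{i : y = x + z i} + #{i : y = x − z i})`. -/
noncomputable def cayP {G : Type*} [AddCommGroup G] [Fintype G] [DecidableEq G] {k : ℕ}
    (z : Fin k → G) (x y : G) : ℝ :=
  (((Finset.univ.filter fun i => y = x + z i).card : ℝ) +
    ((Finset.univ.filter fun i => y = x - z i).card : ℝ)) / (2 * k)

/-- The second-largest eigenvalue `λ₂` of a symmetric stochastic matrix `P` on `G`,
via the variational characterisation over mean-zero functions. -/
noncomputable def lamTwo {G : Type*} [Fintype G] (P : G → G → ℝ) : ℝ :=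
  sSup {r : ℝ | ∃ f : G → ℝ, f ≠ 0 ∧ (∑ x, f x) = 0 ∧
    r = (∑ x, ∑ y, f x * P x y * f y) / (∑ x, (f x) ^ 2)}

/-- The smallest eigenvalue `λ_{|G|}` of a symmetric stochastic matrix `P` on `G`,
via the variational characterisation. -/
noncomputable def lamMin {G : Type*} [Fintype G] (P : G → G → ℝ) : ℝ :=
  sInf {r : ℝ | ∃ f : G → ℝ, f ≠ 0 ∧
    r = (∑ x, ∑ y, f x * P x y * f y) / (∑ x, (f x) ^ 2)}

/-- The spectral gap `γ = 1 − λ₂`. -/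
noncomputable def spectralGap {G : Type*} [Fintype G] (P : G → G → ℝ) : ℝ :=
  1 - lamTwo P

/-- The absolute spectral gap `γ_* = 1 − max{|λ₂|, |λ_{|G|}|}`. -/
noncomputable def absSpectralGap {G : Type*} [Fintype G] (P : G → G → ℝ) : ℝ :=
  1 - max |lamTwo P| |lamMin P|

/-!
For a nontrivial character `χ` of `G`, the function `Re χ` has mean zero and is an eigenfunction
of the walk with eigenvalue the average of `Re χ(z i)`, so `λ₂` is at least that average.
Choose `m ≥ 1` with `m ^ k < |G| ≤ (m + 1) ^ k`. Sorting the `|G|` characters by which of `m`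
arcs of length `2π / m` contains each of the `k` values `χ(z i)`, two characters `χ₁ ≠ χ₂` land in
the same arcs, so `χ = χ₁ / χ₂` has all `|arg χ(z i)| < 2π / m`, hence `Re χ(z i) ≥ 1 - (2π/m)²/2`.
Thus `γ ≤ 2π² / m² ≤ 8π² |G| ^ (-2/k)`.
-/

open Finset Real

section Rayleigh

variable {G : Type*} [Fintype G] {P : G → G → ℝ}

lemma absSpectralGap_le_spectralGap (P : G → G → ℝ) : absSpectralGap P ≤ spectralGap P := by
  unfold absSpectralGap spectralGap
  exact sub_le_sub_left ((le_abs_self _).trans (le_max_left _ _)) 1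

lemma sum_sq_pos_of_ne_zero {f : G → ℝ} (hf : f ≠ 0) : 0 < ∑ x, f x ^ 2 := by
  obtain ⟨x, hx⟩ := Function.ne_iff.mp hf
  exact sum_pos' (fun y _ => sq_nonneg (f y)) ⟨x, mem_univ x, pow_two_pos_of_ne_zero hx⟩

lemma quadForm_le_sum_sq (hP : ∀ x y, 0 ≤ P x y) (hrow : ∀ x, ∑ y, P x y = 1)
    (hcol : ∀ y, ∑ x, P x y = 1) (f : G → ℝ) :
    ∑ x, ∑ y, f x * P x y * f y ≤ ∑ x, f x ^ 2 := by
  calc ∑ x, ∑ y, f x * P x y * f y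
      ≤ ∑ x, ∑ y, (P x y * f x ^ 2 / 2 + P x y * f y ^ 2 / 2) := by
        gcongr with x _ y _
        nlinarith [mul_nonneg (hP x y) (sq_nonneg (f x - f y))]
    _ = ∑ x, (∑ y, P x y) * f x ^ 2 / 2 + ∑ y, (∑ x, P x y) * f y ^ 2 / 2 := by
        simp only [sum_add_distrib, sum_mul, sum_div]
        rw [sum_comm (f := fun x y => P x y * f y ^ 2 / 2)]
    _ = ∑ x, f x ^ 2 := by
        simp only [hrow, hcol, ← sum_add_distrib]
        ring_nf

lemma le_lamTwo_of_eigenfunction (hP : ∀ x y, 0 ≤ P x y) (hrow : ∀ x, ∑ y, P x y = 1)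
    (hcol : ∀ y, ∑ x, P x y = 1) {f : G → ℝ} {μ : ℝ} (hf : f ≠ 0) (hmean : ∑ x, f x = 0)
    (heig : ∀ x, ∑ y, P x y * f y = μ * f x) : μ ≤ lamTwo P := by
  have hquad : ∑ x, ∑ y, f x * P x y * f y = μ * ∑ x, f x ^ 2 := by
    calc ∑ x, ∑ y, f x * P x y * f y = ∑ x, f x * ∑ y, P x y * f y := by
          simp only [mul_sum, mul_assoc]
      _ = μ * ∑ x, f x ^ 2 := by
          simp only [heig, mul_sum]
          exact sum_congr rfl fun x _ => by ring
  refine le_csSup ⟨1, ?_⟩ ⟨f, hf, hmean, ?_⟩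
  · rintro _ ⟨g, hg, -, rfl⟩
    exact (div_le_one (sum_sq_pos_of_ne_zero hg)).2 (quadForm_le_sum_sq hP hrow hcol g)
  · rw [hquad, mul_div_cancel_right₀ _ (sum_sq_pos_of_ne_zero hf).ne']

end Rayleigh

lemma sum_card_filter_eq_mul {ι G : Type*} [Fintype ι] [Fintype G] [DecidableEq G]
    (g : ι → G) (f : G → ℝ) :
    ∑ y, (#{i | y = g i} : ℝ) * f y = ∑ i, f (g i) := by
  rw [← sum_fiberwise univ g fun i => f (g i)]
  refine sum_congr rfl fun y _ => ?_
  rw [sum_congr rfl fun i hi => by rw [(mem_filter.1 hi).2], sum_const, nsmul_eq_mul]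
  simp_rw [eq_comm]

lemma re_addChar_add_add_re_addChar_sub {G : Type*} [AddCommGroup G] [Finite G]
    (χ : AddChar G ℂ) (a x : G) :
    (χ (x + a)).re + (χ (x - a)).re = 2 * (χ a).re * (χ x).re := by
  rw [sub_eq_add_neg, AddChar.map_add_eq_mul, AddChar.map_add_eq_mul, AddChar.map_neg_eq_conj]
  simp only [Complex.mul_re, Complex.conj_re, Complex.conj_im]
  ring

section Cayley

variable {G : Type*} [AddCommGroup G] [Fintype G] [DecidableEq G] {k : ℕ} (z : Fin k → G)

lemma cayP_nonneg (x y : G) : 0 ≤ cayP z x y := by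
  unfold cayP; positivity

lemma cayP_comm (x y : G) : cayP z x y = cayP z y x := by
  unfold cayP
  rw [add_comm]
  congr 4 <;> ext i <;> simp only [mem_filter, mem_univ, true_and] <;> constructor <;>
    rintro rfl <;> abel

lemma sum_cayP_mul (f : G → ℝ) (x : G) :
    ∑ y, cayP z x y * f y = (∑ i, (f (x + z i) + f (x - z i))) / (2 * k) := by
  simp only [cayP, div_mul_eq_mul_div, add_mul, ← sum_div, sum_add_distrib,
    sum_card_filter_eq_mul]

lemma sum_cayP (hk : k ≠ 0) (x : G) : ∑ y, cayP z x y = 1 := by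
  have h := sum_cayP_mul z (fun _ => 1) x
  simp only [mul_one, sum_const, card_univ, Fintype.card_fin, nsmul_eq_mul] at h
  rw [h]
  field_simp
  ring

lemma sum_cayP_left (hk : k ≠ 0) (y : G) : ∑ x, cayP z x y = 1 := by
  simpa only [cayP_comm z _ y] using sum_cayP z hk y

lemma sum_cayP_mul_re_addChar (χ : AddChar G ℂ) (x : G) :
    ∑ y, cayP z x y * (χ y).re = (∑ i, (χ (z i)).re) / k * (χ x).re := by
  simp only [sum_cayP_mul, re_addChar_add_add_re_addChar_sub, ← sum_mul, ← mul_sum]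
  ring

lemma re_sum_div_le_lamTwo_cayP (hk : k ≠ 0) {χ : AddChar G ℂ} (hχ : χ ≠ 0) :
    (∑ i, (χ (z i)).re) / k ≤ lamTwo (cayP z) := by
  refine le_lamTwo_of_eigenfunction (cayP_nonneg z) (sum_cayP z hk) (sum_cayP_left z hk)
    (f := fun x => (χ x).re) ?_ ?_ (sum_cayP_mul_re_addChar z χ)
  · exact Function.ne_iff.2 ⟨0, by simp⟩
  · rw [← Complex.re_sum, AddChar.sum_eq_zero_iff_ne_zero.2 hχ, Complex.zero_re]

end Cayley

lemma exists_ne_forall_abs_sub_lt_one {α ι : Type*} [Fintype α] [Fintype ι] [DecidableEq ι]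
    {m : ℕ} (a : α → ι → ℝ) (ha : ∀ x i, a x i ∈ Set.Ico (0 : ℝ) m)
    (hcard : m ^ Fintype.card ι < Fintype.card α) :
    ∃ x y, x ≠ y ∧ ∀ i, |a x i - a y i| < 1 := by
  obtain ⟨x, -, y, -, hxy, hfloor⟩ := exists_ne_map_eq_of_card_lt_of_maps_to
    (s := univ) (t := Fintype.piFinset fun _ : ι => range m) (f := fun x i => ⌊a x i⌋₊)
    (by simpa [Fintype.card_piFinset] using hcard)
    (fun x _ => by simp [Nat.floor_lt (ha x _).1, (ha x _).2])
  refine ⟨x, y, hxy, fun i => ?_⟩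
  have hi : ⌊a x i⌋₊ = ⌊a y i⌋₊ := congrFun hfloor i
  have hx₀ := Nat.floor_le (ha x i).1
  have hy₀ := Nat.floor_le (ha y i).1
  have hx₁ := Nat.lt_floor_add_one (a x i)
  have hy₁ := Nat.lt_floor_add_one (a y i)
  rw [hi] at hx₀ hx₁
  rw [abs_sub_lt_iff]
  constructor <;> linarith

lemma Complex.re_mul_conj_eq_norm_mul_norm_mul_cos (u v : ℂ) :
    (u * (starRingEnd ℂ) v).re = ‖u‖ * ‖v‖ * Real.cos (u.arg - v.arg) := by
  rw [Real.cos_sub, Complex.mul_re, Complex.conj_re, Complex.conj_im, ← Complex.norm_mul_cos_arg u,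
    ← Complex.norm_mul_cos_arg v, ← Complex.norm_mul_sin_arg u, ← Complex.norm_mul_sin_arg v]
  ring

lemma AddChar.re_div_apply_eq_cos {G : Type*} [AddCommGroup G] [Finite G]
    (χ₁ χ₂ : AddChar G ℂ) (a : G) :
    ((χ₁ / χ₂) a).re = Real.cos ((χ₁ a).arg - (χ₂ a).arg) := by
  rw [AddChar.div_apply', div_eq_mul_inv, ← AddChar.map_neg_eq_inv, AddChar.map_neg_eq_conj,
    Complex.re_mul_conj_eq_norm_mul_norm_mul_cos, AddChar.norm_apply, AddChar.norm_apply,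
    one_mul, one_mul]

lemma exists_addChar_ne_zero_forall_le_re {G : Type*} [AddCommGroup G] [Fintype G] {k : ℕ}
    (z : Fin k → G) {m : ℕ} (hm : 0 < m) (hcard : m ^ k < Fintype.card G) :
    ∃ χ : AddChar G ℂ, χ ≠ 0 ∧ ∀ i, 1 - (2 * π / m) ^ 2 / 2 ≤ (χ (z i)).re := by
  set δ := 2 * π / m with hδ
  have hδ_pos : 0 < δ := by positivity
  have harc : ∀ (χ : AddChar G ℂ) i, (π - (χ (z i)).arg) / δ ∈ Set.Ico (0 : ℝ) m := fun χ i => by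
    have := Complex.neg_pi_lt_arg (χ (z i))
    have := Complex.arg_le_pi (χ (z i))
    rw [Set.mem_Ico, div_lt_iff₀ hδ_pos, hδ, mul_div_cancel₀ _ (by positivity : (m : ℝ) ≠ 0)]
    constructor
    · exact div_nonneg (by linarith) hδ_pos.le
    · linarith
  obtain ⟨χ₁, χ₂, hne, hclose⟩ := exists_ne_forall_abs_sub_lt_one _ harc
    (by rwa [Fintype.card_fin, AddChar.card_eq])
  refine ⟨χ₁ / χ₂, ?_, fun i => ?_⟩
  · rw [← AddChar.one_eq_zero]
    exact div_ne_one.2 hne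
  set θ₁ := (χ₁ (z i)).arg
  set θ₂ := (χ₂ (z i)).arg
  have hθ : |θ₁ - θ₂| < δ := by
    have := hclose i
    rwa [show (π - θ₁) / δ - (π - θ₂) / δ = (θ₂ - θ₁) / δ by ring, abs_div, abs_of_pos hδ_pos,
      div_lt_one hδ_pos, abs_sub_comm] at this
  have hsq : (θ₁ - θ₂) ^ 2 ≤ δ ^ 2 := sq_le_sq' (abs_lt.1 hθ).1.le (abs_lt.1 hθ).2.le
  rw [AddChar.re_div_apply_eq_cos]
  linarith [one_sub_sq_div_two_le_cos (x := θ₁ - θ₂)]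

lemma exists_pow_lt_le_succ_pow {n k : ℕ} (hn : 2 ≤ n) (hk : k ≠ 0) :
    ∃ m, 0 < m ∧ m ^ k < n ∧ n ≤ (m + 1) ^ k := by
  have hex : ∃ m, n ≤ (m + 1) ^ k := ⟨n, (Nat.lt_succ_self n).le.trans (Nat.le_self_pow hk _)⟩
  have hm : 0 < Nat.find hex := Nat.pos_of_ne_zero fun h0 => by
    have := Nat.find_spec hex
    rw [h0, zero_add, one_pow] at this
    omega
  refine ⟨Nat.find hex, hm, ?_, Nat.find_spec hex⟩
  have hmin := Nat.find_min hex (Nat.sub_one_lt_of_lt hm)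
  rwa [Nat.sub_add_cancel hm, not_le] at hmin

lemma natCast_rpow_two_div_le_sq {n m k : ℕ} (hk : k ≠ 0) (h : n ≤ (m + 1) ^ k) :
    (n : ℝ) ^ (2 / (k : ℝ)) ≤ ((m : ℝ) + 1) ^ 2 := by
  calc (n : ℝ) ^ (2 / (k : ℝ)) ≤ (((m : ℝ) + 1) ^ k) ^ (2 / (k : ℝ)) := by
        gcongr
        exact_mod_cast h
    _ = ((m : ℝ) + 1) ^ 2 := by
        rw [← rpow_natCast_mul (by positivity), mul_div_cancel₀ _ (by exact_mod_cast hk)]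
        exact rpow_two _

/-- The relaxation time `t_rel = 1/γ` and absolute relaxation time `t_rel^* = 1/γ_*` satisfy
`t_rel^* ≥ t_rel ≥ c·|G|^{2/k}`; equivalently (and avoiding division conventions),
`γ_* ≤ γ ≤ c⁻¹·|G|^{−2/k}`. -/
theorem statement6 :
    ∃ c : ℝ, 0 < c ∧
    ∀ (G : Type) [AddCommGroup G] [Fintype G] [DecidableEq G],
      2 ≤ Fintype.card G →
      ∀ k : ℕ, 1 ≤ k → ∀ z : Fin k → G,
        absSpectralGap (cayP z) ≤ spectralGap (cayP z) ∧
        spectralGap (cayP z) ≤ c⁻¹ * (Fintype.card G : ℝ) ^ (-(2 / (k : ℝ))) := by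
  refine ⟨(8 * π ^ 2)⁻¹, by positivity, fun G _ _ _ hG k hk z =>
    ⟨absSpectralGap_le_spectralGap _, ?_⟩⟩
  have hk0 : k ≠ 0 := by omega
  obtain ⟨m, hm, hmG, hGm⟩ := exists_pow_lt_le_succ_pow hG hk0
  obtain ⟨χ, hχ, hre⟩ := exists_addChar_ne_zero_forall_le_re z hm hmG
  have hlam : 1 - (2 * π / m) ^ 2 / 2 ≤ lamTwo (cayP z) := by
    refine le_trans ?_ (re_sum_div_le_lamTwo_cayP z hk0 hχ)
    rw [le_div_iff₀ (by positivity), mul_comm]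
    simpa using card_nsmul_le_sum univ _ _ fun i _ => hre i
  have hGrpow : (Fintype.card G : ℝ) ^ (2 / (k : ℝ)) ≤ 4 * (m : ℝ) ^ 2 := by
    have : (1 : ℝ) ≤ m := by exact_mod_cast hm
    nlinarith [natCast_rpow_two_div_le_sq hk0 hGm]
  have hGpos : (0 : ℝ) < Fintype.card G ^ (2 / (k : ℝ)) := by positivity
  rw [inv_inv, rpow_neg (by positivity), ← div_eq_mul_inv, le_div_iff₀ hGpos, spectralGap]
  calc (1 - lamTwo (cayP z)) * Fintype.card G ^ (2 / (k : ℝ))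
      ≤ (2 * π / m) ^ 2 / 2 * (4 * (m : ℝ) ^ 2) := by gcongr; linarith
    _ = 8 * π ^ 2 := by field_simp; ring
end

section
/- Let G be a finite Abelian group (written additively) of order n, let k ≥ 1, let v ∈ ℤ^k, and set gamma := gcd(v_1, ..., v_k, n). If Z_1, ..., Z_k are i.i.d. uniform on G, then the random element Σ_{i=1}^k v_i·Z_i is uniformly distributed on the subgroup gamma·G := {gamma·g : g ∈ G}, where m·g denotes the m-fold sum of g. -/
/-- Probability, over a uniformly random `k`-tuple of elements of `G`, of the event `p`. -/
noncomputable def tupleProb (G : Type*) [Fintype G] (k : ℕ) (p : (Fin k → G) → Prop) : ℝ :=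
  (Nat.card {z : Fin k → G // p z} : ℝ) / (Fintype.card G : ℝ) ^ k

/-- Bézout over a finset: the gcd of the `|f i|` is an integer combination of the `f i`. -/
lemma bezout_finset {ι : Type*} [DecidableEq ι] (s : Finset ι) (f : ι → ℤ) :
    ∃ c : ι → ℤ, ((s.gcd fun i => (f i).natAbs : ℕ) : ℤ) = ∑ i ∈ s, c i * f i := by
  induction s using Finset.induction_on with
  | empty => exact ⟨0, by simp⟩
  | @insert a s ha ih =>
    obtain ⟨c, hc⟩ := ih
    set D : ℕ := s.gcd fun i => (f i).natAbs with hD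
    have hgcd : (insert a s).gcd (fun i => (f i).natAbs) = Int.gcd (f a) (D : ℤ) := by
      rw [Finset.gcd_insert]
      rfl
    refine ⟨fun i => if i = a then Int.gcdA (f a) (D : ℤ)
        else c i * Int.gcdB (f a) (D : ℤ), ?_⟩
    rw [hgcd, Finset.sum_insert ha]
    beta_reduce
    rw [if_pos rfl]
    have h2 := Int.gcd_eq_gcd_ab (f a) (D : ℤ)
    have h3 : ∑ i ∈ s, (if i = a then Int.gcdA (f a) (D : ℤ)
        else c i * Int.gcdB (f a) (D : ℤ)) * f i
        = (∑ i ∈ s, c i * f i) * Int.gcdB (f a) (D : ℤ) := by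
      rw [Finset.sum_mul]
      refine Finset.sum_congr rfl fun i hi => ?_
      rw [if_neg (by rintro rfl; exact ha hi)]
      ring
    rw [h3, ← hc, h2]
    ring

/-- If `γ = gcd(v₁, ..., v_k, |G|)` and `Z₁, ..., Z_k` are i.i.d. uniform on the finite
Abelian group `G`, then `Σ vᵢ • Zᵢ` is uniform on the subgroup `γ·G = {γ • g : g ∈ G}`. -/
theorem statement11 :
    ∀ (G : Type) [AddCommGroup G] [Fintype G],
    ∀ (k : ℕ), 1 ≤ k → ∀ (v : Fin k → ℤ),
    ∀ γ : ℕ, γ = Nat.gcd (Finset.univ.gcd fun i => (v i).natAbs) (Fintype.card G) →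
      (∀ x ∈ Set.range (fun g : G => γ • g),
        tupleProb G k (fun Z => (∑ i, v i • Z i) = x) =
          (Nat.card (Set.range (fun g : G => γ • g)) : ℝ)⁻¹) ∧
      (∀ x : G, x ∉ Set.range (fun g : G => γ • g) →
        tupleProb G k (fun Z => (∑ i, v i • Z i) = x) = 0) := by
  intro G _ _ k hk v γ hγ
  classical
  -- the homomorphism
  set φ : (Fin k → G) →+ G :=
    { toFun := fun Z => ∑ i, v i • Z i
      map_zero' := by simp
      map_add' := by
        intro x y
        simp [smul_add, Finset.sum_add_distrib] } with hφ
  have hφapp : ∀ Z, φ Z = ∑ i, v i • Z i := fun Z => rfl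
  -- the range of φ is γ • G
  have hrange : Set.range (fun g : G => γ • g) = (φ.range : Set G) := by
    apply Set.eq_of_subset_of_subset
    · rintro x ⟨g, rfl⟩
      obtain ⟨c, hc⟩ := bezout_finset (Finset.univ : Finset (Fin k)) v
      set d : ℕ := Finset.univ.gcd fun i => (v i).natAbs with hd
      set n : ℕ := Fintype.card G with hn
      have hγint : (γ : ℤ) = (d : ℤ) * Int.gcdA (d : ℤ) (n : ℤ)
          + (n : ℤ) * Int.gcdB (d : ℤ) (n : ℤ) := by
        have h := Int.gcd_eq_gcd_ab (d : ℤ) (n : ℤ)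
        rwa [show Int.gcd (d : ℤ) (n : ℤ) = Nat.gcd d n by
          simp [Int.gcd], ← hγ] at h
      set A := Int.gcdA (d : ℤ) (n : ℤ) with hA
      refine ⟨fun i => (c i * A) • g, ?_⟩
      rw [hφapp]
      have hng : (n : ℤ) • g = 0 := by
        have h0 : (n : ℕ) • g = 0 := card_nsmul_eq_zero
        rw [natCast_zsmul]; exact h0
      have h5 : ((n : ℤ) * Int.gcdB (d : ℤ) (n : ℤ)) • g = 0 := by
        rw [mul_comm, mul_smul, hng, smul_zero]
      show ∑ i, v i • (c i * A) • g = γ • g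
      calc ∑ i, v i • (c i * A) • g
          = ∑ i, (c i * v i * A) • g := by
            refine Finset.sum_congr rfl fun i _ => ?_
            rw [← mul_smul]
            congr 1
            ring
        _ = ((d : ℤ) * A) • g := by
            rw [← Finset.sum_smul, ← Finset.sum_mul, ← hc]
        _ = (γ : ℤ) • g := by rw [hγint, add_smul, h5, add_zero]
        _ = γ • g := natCast_zsmul g γ
    · rintro x ⟨Z, rfl⟩
      rw [hφapp]
      have hdvd : ∀ i, (γ : ℤ) ∣ v i := by
        intro i
        have h1 : γ ∣ Finset.univ.gcd fun i => (v i).natAbs := hγ ▸ Nat.gcd_dvd_left _ _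
        have h2 : (Finset.univ.gcd fun i => (v i).natAbs) ∣ (v i).natAbs :=
          Finset.gcd_dvd (Finset.mem_univ i)
        exact Int.dvd_natAbs.mp (Int.natCast_dvd_natCast.mpr (h1.trans h2))
      refine ⟨∑ i, (v i / (γ : ℤ)) • Z i, ?_⟩
      show γ • (∑ i, (v i / (γ : ℤ)) • Z i) = _
      rw [← natCast_zsmul, Finset.smul_sum]
      exact Finset.sum_congr rfl fun i _ => by
        rw [← mul_smul, Int.mul_ediv_cancel' (hdvd i)]
  -- key cardinality fact
  have hcard : Nat.card φ.ker * Nat.card φ.range = Fintype.card G ^ k := by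
    have h1 : Nat.card (Fin k → G) =
        Nat.card ((Fin k → G) ⧸ φ.ker) * Nat.card φ.ker :=
      AddSubgroup.card_eq_card_quotient_mul_card_addSubgroup φ.ker
    have h2 : Nat.card ((Fin k → G) ⧸ φ.ker) = Nat.card φ.range :=
      Nat.card_congr (QuotientAddGroup.quotientKerEquivRange φ).toEquiv
    have h3 : Nat.card (Fin k → G) = Fintype.card G ^ k := by
      simp [Nat.card_eq_fintype_card]
    rw [h2] at h1
    rw [← h3, h1]; ring
  constructor
  · intro x hx
    rw [hrange] at hx
    obtain ⟨z0, hz0⟩ := hx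
    have hfiber : Nat.card {z : Fin k → G // (∑ i, v i • z i) = x}
        = Nat.card φ.ker := by
      apply Nat.card_congr
      refine ⟨fun z => ⟨z.1 - z0, ?_⟩, fun w => ⟨w.1 + z0, ?_⟩, ?_, ?_⟩
      · have h : φ z.1 = x := z.2
        simp [AddMonoidHom.mem_ker, h, hz0]
      · have h : φ w.1 = 0 := w.2
        show φ (w.1 + z0) = x
        simp [h, hz0]
      · intro z; ext; simp
      · intro w; ext; simp
    have hrangecard : Nat.card (Set.range fun g : G => γ • g) = Nat.card φ.range := by
      rw [hrange]; rfl
    rw [tupleProb, hfiber, hrangecard]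
    have hne : ((Fintype.card G : ℝ)) ^ k ≠ 0 := by positivity
    have hrne : (Nat.card φ.range : ℝ) ≠ 0 := by
      have h : 0 < Nat.card φ.range := Nat.card_pos
      positivity
    rw [div_eq_iff hne, inv_mul_eq_div, eq_div_iff hrne]
    rw [← Nat.cast_mul, hcard]
    push_cast
    ring
  · intro x hx
    rw [hrange] at hx
    have he : IsEmpty {z : Fin k → G // (∑ i, v i • z i) = x} :=
      ⟨fun z => hx ⟨z.1, z.2⟩⟩
    rw [tupleProb, Nat.card_of_isEmpty]
    simp
end

section
/- Let k ≥ 1 be an integer and let L > 1 and L_0 ≥ 0 be real numbers. Let W = (W_1,...,W_k) and W' = (W'_1,...,W'_k) be independent, with all 2k coordinates i.i.d. Geometric(1/L) on {1, 2, ...} (i.e. P(W_i = w) = L^{−1}(1 − L^{−1})^{w−1} for w ∈ {1,2,...}). Then P( W = W' and Σ_{i=1}^k W_i ≥ k·(L_0 + 1) ) ≤ L^{−k}·(1 − L^{−1})^{k·L_0}. -/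
/-- The probability that an i.i.d. vector of `Geometric(1/L)` variables on `{1,2,...}`
equals `w`: `∏ i, L⁻¹(1−L⁻¹)^{wᵢ−1}` if all `wᵢ ≥ 1`, and `0` otherwise. -/
noncomputable def geomP (L : ℝ) {k : ℕ} (w : Fin k → ℕ) : ℝ :=
  ∏ i, (if 1 ≤ w i then L⁻¹ * (1 - L⁻¹) ^ (w i - 1) else 0)

/-!
On the event `W = W'` the probability is `∑_w P(W = w)²`, which is at most the largest value of
`P(W = w)` over the admissible `w` (times the total mass `1`). If `∑ wᵢ ≥ k (L₀ + 1)` then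
`P(W = w) = L^{-k} (1 - L⁻¹)^{∑ (wᵢ - 1)}` and the exponent is at least `k L₀`.
-/

theorem hasSum_shifted_geometric {r : ℝ} (hr0 : 0 ≤ r) (hr1 : r < 1) :
    HasSum (fun n : ℕ => if 1 ≤ n then (1 - r) * r ^ (n - 1) else 0) 1 := by
  refine (hasSum_nat_add_iff' 1).mp ?_
  have hgeom := (hasSum_geometric_of_lt_one hr0 hr1).mul_left (1 - r)
  rw [mul_inv_cancel₀ (sub_ne_zero.mpr hr1.ne')] at hgeom
  simpa using hgeom

theorem HasSum.prod_fin_pi {α : Type*} {f : α → ℝ} {a : ℝ} (hf0 : 0 ≤ f) (hf : HasSum f a)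
    (k : ℕ) : HasSum (fun w : Fin k → α => ∏ i, f (w i)) (a ^ k) := by
  induction k with
  | zero => simp
  | succ k ih =>
    set g : (Fin k → α) → ℝ := fun w => ∏ i, f (w i)
    have hg0 : 0 ≤ g := fun w => Finset.prod_nonneg fun i _ => hf0 (w i)
    have hs : Summable fun p : α × (Fin k → α) => f p.1 * g p.2 :=
      Summable.mul_of_nonneg hf.summable ih.summable hf0 hg0
    rw [pow_succ', ← (Fin.consEquiv fun _ => α).hasSum_iff]
    simpa [g, Function.comp_def, Fin.prod_univ_succ] using hf.mul ih hs

theorem tsum_indicator_diagonal_mul_le {α : Type*} {f : α → ℝ} {a : ℝ} (hf0 : 0 ≤ f)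
    (hf : HasSum f a) {P : α → Prop} {C : ℝ} (hC0 : 0 ≤ C) (hC : ∀ x, P x → f x ≤ C) :
    ∑' p : α × α, {p : α × α | p.1 = p.2 ∧ P p.1}.indicator (fun p => f p.1 * f p.2) p ≤
      C * a := by
  have hinj : Function.Injective fun x : α => (x, x) := fun _ _ h => congrArg Prod.fst h
  have hdiag : ∑' p : α × α, {p : α × α | p.1 = p.2 ∧ P p.1}.indicator (fun p => f p.1 * f p.2) p
      = ∑' x, {x | P x}.indicator (fun x => f x * f x) x := by
    rw [← hinj.tsum_eq]
    · congr 1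
      ext x
      by_cases hx : P x <;> simp [hx]
    · intro p hp
      exact ⟨p.1, Prod.ext rfl (Set.indicator_apply_ne_zero.mp hp).1.1⟩
  have hle : ∀ x, {x | P x}.indicator (fun x => f x * f x) x ≤ C * f x := by
    intro x
    by_cases hx : P x
    · simpa [hx] using mul_le_mul_of_nonneg_right (hC x hx) (hf0 x)
    · simpa [hx] using mul_nonneg hC0 (hf0 x)
  have hnonneg : ∀ x, 0 ≤ {x | P x}.indicator (fun x => f x * f x) x :=
    Set.indicator_nonneg fun x _ => mul_nonneg (hf0 x) (hf0 x)
  have hCf := hf.mul_left C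
  rw [hdiag, ← hCf.tsum_eq]
  exact (hCf.summable.of_nonneg_of_le hnonneg hle).tsum_le_tsum hle hCf.summable

section geomP

variable {L : ℝ} {k : ℕ}

theorem inv_pos_and_one_sub_inv_pos (hL : 1 < L) : 0 < L⁻¹ ∧ 0 < 1 - L⁻¹ :=
  ⟨inv_pos.mpr (zero_lt_one.trans hL), sub_pos.mpr (inv_lt_one_of_one_lt₀ hL)⟩

theorem geomP_nonneg (hL : 1 < L) (w : Fin k → ℕ) : 0 ≤ geomP L w := by
  obtain ⟨hinv, hsub⟩ := inv_pos_and_one_sub_inv_pos hL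
  refine Finset.prod_nonneg fun i _ => ?_
  split_ifs
  exacts [by positivity, le_rfl]

theorem hasSum_geomP (hL : 1 < L) (k : ℕ) : HasSum (geomP L (k := k)) 1 := by
  obtain ⟨hinv, hsub⟩ := inv_pos_and_one_sub_inv_pos hL
  have h := hasSum_shifted_geometric hsub.le (sub_lt_self 1 hinv)
  rw [sub_sub_cancel] at h
  have hprod := h.prod_fin_pi (fun n => by split_ifs <;> positivity) k
  rwa [one_pow] at hprod

theorem geomP_eq_of_forall_one_le {w : Fin k → ℕ} (hw : ∀ i, 1 ≤ w i) :
    geomP L w = L⁻¹ ^ k * (1 - L⁻¹) ^ (∑ i, (w i - 1)) := by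
  simp [geomP, hw, Finset.prod_mul_distrib, Finset.prod_pow_eq_pow_sum]

theorem geomP_eq_zero_of_eq_zero {w : Fin k → ℕ} {i : Fin k} (hi : w i = 0) : geomP L w = 0 :=
  Finset.prod_eq_zero (Finset.mem_univ i) (by simp [hi])

theorem geomP_le_of_mul_le_sum (hL : 1 < L) {L₀ : ℝ} {w : Fin k → ℕ}
    (hw : (k : ℝ) * (L₀ + 1) ≤ ∑ i, (w i : ℝ)) :
    geomP L w ≤ L ^ (-(k : ℝ)) * (1 - L⁻¹) ^ ((k : ℝ) * L₀) := by
  obtain ⟨hinv, hsub⟩ := inv_pos_and_one_sub_inv_pos hL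
  by_cases hall : ∀ i, 1 ≤ w i
  · have hexcess : (k : ℝ) * L₀ ≤ ((∑ i, (w i - 1) : ℕ) : ℝ) := by
      push_cast [Nat.cast_sub (hall _)]
      rw [Finset.sum_sub_distrib]
      simp only [Finset.sum_const, Finset.card_univ, Fintype.card_fin, nsmul_eq_mul, mul_one]
      linarith
    rw [geomP_eq_of_forall_one_le hall, Real.rpow_neg (zero_lt_one.trans hL).le,
      Real.rpow_natCast, inv_pow, ← Real.rpow_natCast (1 - L⁻¹)]
    exact mul_le_mul_of_nonneg_left
      (Real.rpow_le_rpow_of_exponent_ge hsub (sub_le_self 1 hinv.le) hexcess) (by positivity)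
  · obtain ⟨i, hi⟩ := not_forall.mp hall
    rw [geomP_eq_zero_of_eq_zero (Nat.eq_zero_of_not_pos hi)]
    positivity

end geomP

theorem statement14 :
    ∀ (k : ℕ), 1 ≤ k → ∀ L L₀ : ℝ, 1 < L → 0 ≤ L₀ →
      (∑' p : (Fin k → ℕ) × (Fin k → ℕ),
        Set.indicator {p : (Fin k → ℕ) × (Fin k → ℕ) |
            p.1 = p.2 ∧ (k : ℝ) * (L₀ + 1) ≤ ∑ i, (p.1 i : ℝ)}
          (fun p => geomP L p.1 * geomP L p.2) p) ≤
      L ^ (-(k : ℝ)) * (1 - L⁻¹) ^ ((k : ℝ) * L₀) := by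
  intro k _ L L₀ hL _
  obtain ⟨-, hsub⟩ := inv_pos_and_one_sub_inv_pos hL
  have hC0 : 0 ≤ L ^ (-(k : ℝ)) * (1 - L⁻¹) ^ ((k : ℝ) * L₀) :=
    mul_nonneg (Real.rpow_nonneg (zero_lt_one.trans hL).le _) (Real.rpow_nonneg hsub.le _)
  simpa using tsum_indicator_diagonal_mul_le (P := fun w => (k : ℝ) * (L₀ + 1) ≤ ∑ i, (w i : ℝ))
    (geomP_nonneg hL) (hasSum_geomP hL k) hC0 fun _ => geomP_le_of_mul_le_sum hL
end

section
/- There exists an absolute constant C such that the following holds. Let G = Z_{m_1} ⊕ ... ⊕ Z_{m_d} be a finite Abelian group of size n with d = d(G), and let k and M be positive integers with 2M < min_j m_j. Let W and W' be i.i.d. uniform on the lattice ball B_k^±(M), set V := W − W', I := {i ∈ {1,...,k} : W_i ≠ W'_i}, and g := gcd(V_1, ..., V_k, n), and let Z_1, ..., Z_k be i.i.d. uniform on G, independent of (W, W'). Then for every nonempty set I_0 ⊆ {1,...,k}: n·P( Σ_i V_i·Z_i = 0 | I = I_0 ) ≤ E[ g^d | I = I_0 ]; and E[ g^d | I = I_0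 ] ≤ C·2^d·(2M)^{d − |I_0| + 2} if |I_0| ≤ d + 1, while E[ g^d | I = I_0 ] ≤ 1 + 5·(3/2)^{2d − |I_0|} if |I_0| ≥ d + 2. -/
/-- Minimal size of a generating subset of the additive group `G`. -/
noncomputable def minGenAdd (G : Type*) [AddCommGroup G] : ℕ :=
  sInf {n : ℕ | ∃ s : Finset G, s.card = n ∧ AddSubgroup.closure (s : Set G) = ⊤}

/-- Membership in the `L¹` lattice ball of radius `M` in dimension `k`
(undirected: `ℤ^k`; directed `undir = false`: `ℤ_{≥0}^k`). -/
def inBall (undir : Bool) {k : ℕ} (M : ℕ) (w : Fin k → ℤ) : Prop :=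
  (∑ i, (w i).natAbs) ≤ M ∧ (undir = false → ∀ i, 0 ≤ w i)

/-- `gcd(v₁, ..., v_k, n)`. -/
noncomputable def gcdWithN {k : ℕ} (v : Fin k → ℤ) (n : ℕ) : ℕ :=
  Nat.gcd (Finset.univ.gcd fun i => (v i).natAbs) n

/-- The event `{W, W' ∈ B_k^±(M), I(W,W') = I₀}` for a pair `p = (W, W')`. -/
def pairEvent (undir : Bool) {k : ℕ} (M : ℕ) (I₀ : Finset (Fin k)) :
    Set ((Fin k → ℤ) × (Fin k → ℤ)) :=
  {p | inBall undir M p.1 ∧ inBall undir M p.2 ∧ {i | p.1 i ≠ p.2 i} = (I₀ : Set (Fin k))}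

/-!
For fixed `V = W - W'` put `g = gcd(V, n)`. By Bézout the image of `Z ↦ ∑ Vᵢ • Zᵢ` on `G^k`
contains `g • G`, and the `g`-torsion of `G = ⊕ ZMod mⱼ` has at most `g^d` elements, so
`n · P(∑ Vᵢ • Zᵢ = 0) ≤ g^d` already holds pointwise in `V`.

For the moments, `g ≤ 2M` divides every `Vᵢ` with `i ∈ I₀`, so
`g^d ≤ 1 + ∑_{2 ≤ e ≤ 2M} e^d · [e ∣ Vᵢ for all i ∈ I₀]`. Conditionally on all other coordinates,
`(Wᵢ, W'ᵢ)` for `i ∈ I₀` is uniform on `S × S'` minus the diagonal, for two nested intervals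
`S`, `S'`, and there `e ∣ Wᵢ - W'ᵢ` has probability at most `1/e`. Peeling off the coordinates
of `I₀` one at a time gives `P(e ∣ Vᵢ for all i ∈ I₀) ≤ e^(-|I₀|)`, and it remains to bound
`∑_{2 ≤ e ≤ 2M} e^(d - |I₀|)`.
-/

open Finset Function

theorem AddMonoidHom.card_mul_card_ker_le {G H : Type*} [AddGroup G] [AddGroup H] [Finite G]
    [Finite H] (f : H →+ G) (g : G →+ G) (hgf : g.range ≤ f.range) :
    Nat.card G * Nat.card f.ker ≤ Nat.card g.ker * Nat.card H := by
  have hf := f.ker.card_mul_index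
  have hg := g.ker.card_mul_index
  rw [AddSubgroup.index_ker] at hf hg
  calc Nat.card G * Nat.card f.ker = Nat.card g.ker * Nat.card g.range * Nat.card f.ker := by
        rw [hg]
    _ ≤ Nat.card g.ker * Nat.card f.range * Nat.card f.ker := by
        gcongr; exact AddSubgroup.card_le_of_le hgf
    _ = Nat.card g.ker * Nat.card H := by rw [← hf]; ring

theorem Finset.natCast_gcd_natAbs {ι : Type*} (s : Finset ι) (v : ι → ℤ) :
    ((s.gcd fun i => (v i).natAbs : ℕ) : ℤ) = s.gcd v := by
  refine Int.dvd_antisymm (by positivity) ?_ (Finset.dvd_gcd fun i hi => ?_) ?_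
  · rw [← Finset.normalize_gcd, ← Int.abs_eq_normalize]; exact abs_nonneg _
  · exact Int.natCast_dvd.2 (Finset.gcd_dvd hi)
  · exact Int.dvd_natCast.2 (Finset.dvd_gcd fun i hi => Int.natAbs_dvd_natAbs.2 (Finset.gcd_dvd hi))

theorem exists_gcdWithN_eq_sum {k : ℕ} (v : Fin k → ℤ) (n : ℕ) :
    ∃ (c : Fin k → ℤ) (c₀ : ℤ), (gcdWithN v n : ℤ) = ∑ i, v i * c i + n * c₀ := by
  obtain ⟨c, hc⟩ := Finset.gcd_eq_sum_mul univ v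
  set g := univ.gcd fun i => (v i).natAbs
  refine ⟨fun i => c i * g.gcdA n, g.gcdB n, ?_⟩
  rw [gcdWithN, Nat.gcd_eq_gcd_ab, Finset.natCast_gcd_natAbs, hc, sum_mul]
  simp only [g, mul_assoc]

theorem gcdWithN_dvd {k : ℕ} (v : Fin k → ℤ) (n : ℕ) (i : Fin k) : (gcdWithN v n : ℤ) ∣ v i :=
  Int.natCast_dvd.2 ((Nat.gcd_dvd_left _ _).trans (Finset.gcd_dvd (mem_univ i)))

section WeightedSum

variable {G : Type*} [AddCommGroup G] {k : ℕ}

def weightedSumHom (v : Fin k → ℤ) : (Fin k → G) →+ G :=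
  AddMonoidHom.mk' (fun Z => ∑ i, v i • Z i) fun Z W => by
    simp only [Pi.add_apply, smul_add, sum_add_distrib]

theorem range_nsmul_gcdWithN_le [Finite G] (v : Fin k → ℤ) :
    (nsmulAddMonoidHom (gcdWithN v (Nat.card G)) : G →+ G).range ≤ (weightedSumHom v).range := by
  rintro _ ⟨y, rfl⟩
  obtain ⟨c, c₀, hc⟩ := exists_gcdWithN_eq_sum v (Nat.card G)
  refine ⟨fun i => c i • y, ?_⟩
  have hy : (Nat.card G : ℤ) • y = 0 := by rw [natCast_zsmul, card_nsmul_eq_zero']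
  change ∑ i, v i • c i • y = gcdWithN v (Nat.card G) • y
  rw [← natCast_zsmul, hc, add_zsmul, mul_comm _ c₀, mul_zsmul, hy, smul_zero, add_zero, sum_smul]
  simp only [mul_zsmul]

end WeightedSum

theorem card_ker_nsmul_pi_le {ι : Type*} [Fintype ι] (G : ι → Type*) [∀ j, AddCommGroup (G j)]
    [∀ j, IsAddCyclic (G j)] [∀ j, Finite (G j)] {g : ℕ} (hg : 0 < g) :
    Nat.card (nsmulAddMonoidHom g : (∀ j, G j) →+ ∀ j, G j).ker ≤ g ^ Fintype.card ι := by
  have hker : (nsmulAddMonoidHom g : (∀ j, G j) →+ ∀ j, G j).ker ≃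
      ∀ j, (nsmulAddMonoidHom g : G j →+ G j).ker :=
    (Equiv.subtypeEquivRight fun x => by simp [funext_iff]).trans Equiv.subtypePiEquivPi
  rw [Nat.card_congr hker, Nat.card_pi]
  refine prod_le_pow_card _ _ _ fun j _ => ?_
  rw [IsAddCyclic.card_nsmulAddMonoidHom_ker]
  exact Nat.gcd_le_right _ hg

theorem card_mul_card_weightedSum_eq_zero_le {ι : Type*} [Fintype ι] (G : ι → Type*)
    [∀ j, AddCommGroup (G j)] [∀ j, IsAddCyclic (G j)] [∀ j, Finite (G j)] {k : ℕ}
    (v : Fin k → ℤ) :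
    Nat.card (∀ j, G j) * Nat.card {Z : Fin k → ∀ j, G j // ∑ i, v i • Z i = 0} ≤
      gcdWithN v (Nat.card (∀ j, G j)) ^ Fintype.card ι * Nat.card (∀ j, G j) ^ k := by
  have hg : 0 < gcdWithN v (Nat.card (∀ j, G j)) := Nat.gcd_pos_of_pos_right _ Nat.card_pos
  calc _ = Nat.card (∀ j, G j) * Nat.card (weightedSumHom v).ker := rfl
    _ ≤ Nat.card (nsmulAddMonoidHom (gcdWithN v (Nat.card (∀ j, G j))) :
          (∀ j, G j) →+ ∀ j, G j).ker * Nat.card (Fin k → ∀ j, G j) :=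
        AddMonoidHom.card_mul_card_ker_le _ _ (range_nsmul_gcdWithN_le v)
    _ ≤ _ := by
        rw [Nat.card_fun, Nat.card_fin]
        gcongr
        exact card_ker_nsmul_pi_le G hg

theorem card_mul_tupleProb_le {d k : ℕ} (m : Fin d → ℕ) [∀ j, NeZero (m j)] (v : Fin k → ℤ) :
    (Fintype.card (∀ j, ZMod (m j)) : ℝ) *
        tupleProb (∀ j, ZMod (m j)) k (fun Z => ∑ i, v i • Z i = 0) ≤
      (gcdWithN v (Fintype.card (∀ j, ZMod (m j))) : ℝ) ^ d := by
  have h := card_mul_card_weightedSum_eq_zero_le (fun j => ZMod (m j)) v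
  rw [Fintype.card_fin, Nat.card_eq_fintype_card] at h
  rw [tupleProb, mul_div_assoc', div_le_iff₀ (by positivity)]
  exact_mod_cast h

section IntervalCounting

variable {e : ℕ}

theorem Int.mul_card_filter_dvd_sub_le (he : 0 < e) {c d x : ℤ} (hx : x ∈ Icc c d) :
    e * #{y ∈ Icc c d | x ≠ y ∧ (e : ℤ) ∣ x - y} ≤ #{y ∈ Icc c d | x ≠ y} := by
  rw [mem_Icc] at hx
  have he' : (0 : ℤ) < e := by exact_mod_cast he
  set A := (x - c) / e
  set B := (d - x) / e
  have hsub : {y ∈ Icc c d | x ≠ y ∧ (e : ℤ) ∣ x - y} ⊆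
      ((Icc (-B) A).erase 0).image (fun t => x - e * t) := by
    intro y hy
    simp only [mem_filter, mem_Icc] at hy
    obtain ⟨⟨hcy, hyd⟩, hne, t, ht⟩ := hy
    refine mem_image.2 ⟨t, mem_erase.2 ⟨?_, mem_Icc.2 ⟨?_, ?_⟩⟩, by omega⟩
    · rintro rfl
      omega
    · rw [neg_le]
      exact Int.le_ediv_of_mul_le he' (by linarith)
    · exact Int.le_ediv_of_mul_le he' (by linarith)
  have hA := Int.mul_ediv_self_le (x := x - c) he'.ne'
  have hB := Int.mul_ediv_self_le (x := d - x) he'.ne'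
  have hA0 : 0 ≤ A := Int.ediv_nonneg (by omega) he'.le
  have hB0 : 0 ≤ B := Int.ediv_nonneg (by omega) he'.le
  have hmult : #{y ∈ Icc c d | x ≠ y ∧ (e : ℤ) ∣ x - y} ≤ #((Icc (-B) A).erase 0) :=
    (card_le_card hsub).trans card_image_le
  have hmult' : (#((Icc (-B) A).erase 0) : ℤ) = A + B := by
    rw [card_erase_of_mem (by simp; omega), Int.card_Icc]
    omega
  have hall : (#{y ∈ Icc c d | x ≠ y} : ℤ) = d - c := by
    rw [filter_ne, card_erase_of_mem (by simp; omega), Int.card_Icc]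
    omega
  have : (e : ℤ) * #{y ∈ Icc c d | x ≠ y ∧ (e : ℤ) ∣ x - y} ≤ #{y ∈ Icc c d | x ≠ y} := by
    rw [hall]
    calc (e : ℤ) * #{y ∈ Icc c d | x ≠ y ∧ (e : ℤ) ∣ x - y}
        ≤ e * #((Icc (-B) A).erase 0) := by gcongr
      _ ≤ d - c := by rw [hmult']; linarith
  exact_mod_cast this

theorem Int.mul_card_offDiag_filter_dvd_le (he : 0 < e) {X : Finset ℤ} {c d : ℤ}
    (hX : X ⊆ Icc c d) :
    e * #{z ∈ X ×ˢ Icc c d | z.1 ≠ z.2 ∧ (e : ℤ) ∣ z.1 - z.2} ≤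
      #{z ∈ X ×ˢ Icc c d | z.1 ≠ z.2} := by
  simp only [card_filter, sum_product, mul_sum]
  refine sum_le_sum fun x hx => ?_
  simpa only [card_filter, mul_sum] using Int.mul_card_filter_dvd_sub_le he (hX hx)

end IntervalCounting

theorem Finset.card_filter_product_comm {α β : Type*} (s : Finset α) (t : Finset β)
    (p : α × β → Prop) [DecidablePred p] :
    #{z ∈ s ×ˢ t | p z} = #{z ∈ t ×ˢ s | p z.swap} := by
  rw [← map_swap_product, filter_map, card_map]
  rfl

/-- The values a coordinate of a point of the ball can take once the other coordinates have used
up `M - R` of the `L¹` budget (see `inBall_update_iff`). -/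
noncomputable def ballSlice (undir : Bool) (R : ℤ) : Finset ℤ := Icc (if undir then -R else 0) R

theorem mem_ballSlice {undir : Bool} {R x : ℤ} :
    x ∈ ballSlice undir R ↔ |x| ≤ R ∧ (undir = false → 0 ≤ x) := by
  cases undir <;> simp [ballSlice, abs_le]
  omega

theorem ballSlice_mono (undir : Bool) {R R' : ℤ} (h : R ≤ R') :
    ballSlice undir R ⊆ ballSlice undir R' := by
  cases undir
  · exact Icc_subset_Icc le_rfl h
  · exact Icc_subset_Icc (neg_le_neg h) h

theorem mul_card_ballSlice_offDiag_dvd_le {e : ℕ} (he : 0 < e) (undir : Bool) (R R' : ℤ) :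
    e * #{z ∈ ballSlice undir R ×ˢ ballSlice undir R' | z.1 ≠ z.2 ∧ (e : ℤ) ∣ z.1 - z.2} ≤
      #{z ∈ ballSlice undir R ×ˢ ballSlice undir R' | z.1 ≠ z.2} := by
  rcases le_total R R' with h | h
  · exact Int.mul_card_offDiag_filter_dvd_le he (ballSlice_mono undir h)
  · rw [card_filter_product_comm, card_filter_product_comm (p := fun z => z.1 ≠ z.2)]
    have hsymm : ∀ z : ℤ × ℤ, z.2 ≠ z.1 ↔ z.1 ≠ z.2 := fun _ => ne_comm
    simp only [Prod.fst_swap, Prod.snd_swap, hsymm, dvd_sub_comm (a := (e : ℤ))]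
    exact Int.mul_card_offDiag_filter_dvd_le he (ballSlice_mono undir h)

section Balls

variable {undir : Bool} {k M : ℕ}

theorem natAbs_le_of_inBall {w : Fin k → ℤ} (hw : inBall undir M w) (i : Fin k) :
    (w i).natAbs ≤ M :=
  (single_le_sum (f := fun j => (w j).natAbs) (fun _ _ => Nat.zero_le _) (mem_univ i)).trans hw.1

theorem inBall_update_iff {u : Fin k → ℤ} {i : Fin k} (hu : u i = 0) (x : ℤ) :
    inBall undir M (update u i x) ↔
      inBall undir M u ∧ x ∈ ballSlice undir (M - ∑ j, |u j|) := by
  have hsum : ∀ y, ∑ j, (update u i y j).natAbs = y.natAbs + ∑ j ∈ univ \ {i}, (u j).natAbs :=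
    fun y => by simp only [apply_update (fun _ => Int.natAbs), sum_update_of_mem (mem_univ i)]
  have hpos : ∀ y, (∀ j, 0 ≤ update u i y j) ↔ 0 ≤ y ∧ ∀ j ≠ i, 0 ≤ u j :=
    fun y => forall_update_iff u (p := fun _ z => 0 ≤ z)
  have hu' : update u i 0 = u := by rw [← hu, update_eq_self]
  have hsum₀ := hsum 0
  have hpos₀ := hpos 0
  rw [hu', Int.natAbs_zero, zero_add] at hsum₀
  rw [hu'] at hpos₀
  have hcast : ((∑ j, (u j).natAbs : ℕ) : ℤ) = ∑ j, |u j| := by push_cast [Int.natCast_natAbs]; rfl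
  rw [inBall, inBall, hsum, hpos, hpos₀, mem_ballSlice, ← hcast, hsum₀]
  generalize ∑ j ∈ univ \ {i}, (u j).natAbs = S
  rw [← Int.natCast_natAbs]
  cases undir <;> simp <;> grind

end Balls

section Pairs

variable {undir : Bool} {k M : ℕ} {I₀ : Finset (Fin k)} {i : Fin k}

def eraseCoord (i : Fin k) (p : (Fin k → ℤ) × (Fin k → ℤ)) : (Fin k → ℤ) × (Fin k → ℤ) :=
  (update p.1 i 0, update p.2 i 0)

def setCoord (i : Fin k) (q : (Fin k → ℤ) × (Fin k → ℤ)) (z : ℤ × ℤ) :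
    (Fin k → ℤ) × (Fin k → ℤ) :=
  (update q.1 i z.1, update q.2 i z.2)

@[simp]
theorem setCoord_apply_self (q : (Fin k → ℤ) × (Fin k → ℤ)) (z : ℤ × ℤ) :
    (setCoord i q z).1 i = z.1 ∧ (setCoord i q z).2 i = z.2 := by
  simp [setCoord]

theorem eraseCoord_setCoord (q : (Fin k → ℤ) × (Fin k → ℤ)) (z : ℤ × ℤ) :
    eraseCoord i (setCoord i q z) = eraseCoord i q := by
  simp [eraseCoord, setCoord]

theorem setCoord_eraseCoord (p : (Fin k → ℤ) × (Fin k → ℤ)) :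
    setCoord i (eraseCoord i p) (p.1 i, p.2 i) = p := by
  simp [eraseCoord, setCoord]

theorem eraseCoord_eraseCoord (p : (Fin k → ℤ) × (Fin k → ℤ)) :
    eraseCoord i (eraseCoord i p) = eraseCoord i p := by
  simp [eraseCoord]

theorem setOf_update_ne_eq_iff {u w : Fin k → ℤ} (hi : i ∈ I₀) (hu : u i = 0) (hw : w i = 0)
    (x y : ℤ) :
    {j | update u i x j ≠ update w i y j} = (I₀ : Set (Fin k)) ↔
      {j | u j ≠ w j} = ((I₀.erase i : Finset (Fin k)) : Set (Fin k)) ∧ x ≠ y := by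
  simp only [Set.ext_iff, Set.mem_ofPred_eq, mem_coe, mem_erase]
  constructor
  · intro h
    refine ⟨fun j => ?_, by simpa using (h i).2 hi⟩
    rcases eq_or_ne j i with rfl | hj
    · simp [hu, hw]
    · simpa [hj, update_of_ne hj] using h j
  · rintro ⟨h, hxy⟩ j
    rcases eq_or_ne j i with rfl | hj
    · simp [hxy, hi]
    · simpa [hj, update_of_ne hj] using h j

theorem setCoord_mem_pairEvent_iff {q : (Fin k → ℤ) × (Fin k → ℤ)} (hi : i ∈ I₀)
    (hq : eraseCoord i q = q) (z : ℤ × ℤ) :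
    setCoord i q z ∈ pairEvent undir M I₀ ↔ q ∈ pairEvent undir M (I₀.erase i) ∧
      z ∈ ballSlice undir (M - ∑ j, |q.1 j|) ×ˢ ballSlice undir (M - ∑ j, |q.2 j|) ∧
      z.1 ≠ z.2 := by
  have h₁ : q.1 i = 0 := by rw [← hq]; simp [eraseCoord]
  have h₂ : q.2 i = 0 := by rw [← hq]; simp [eraseCoord]
  simp only [pairEvent, setCoord, Set.mem_ofPred_eq, inBall_update_iff h₁,
    inBall_update_iff h₂, setOf_update_ne_eq_iff hi h₁ h₂, mem_product]
  tauto

theorem pairEvent_finite (undir : Bool) (M : ℕ) (I₀ : Finset (Fin k)) :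
    (pairEvent undir M I₀).Finite := by
  have hball : {w : Fin k → ℤ | inBall undir M w}.Finite :=
    (Set.Finite.pi' fun _ => Set.finite_Icc (-(M : ℤ)) M).subset fun w hw i => by
      have := natAbs_le_of_inBall hw i
      exact abs_le.1 (by rw [← Int.natCast_natAbs]; exact_mod_cast this)
  exact (hball.prod hball).subset fun p hp => ⟨hp.1, hp.2.1⟩

noncomputable def pairFinset (undir : Bool) (M : ℕ) (I₀ : Finset (Fin k)) :
    Finset ((Fin k → ℤ) × (Fin k → ℤ)) :=
  (pairEvent_finite undir M I₀).toFinset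

@[simp]
theorem mem_pairFinset {p : (Fin k → ℤ) × (Fin k → ℤ)} :
    p ∈ pairFinset undir M I₀ ↔ p ∈ pairEvent undir M I₀ :=
  Set.Finite.mem_toFinset _

theorem card_fiber_eraseCoord (hi : i ∈ I₀) {q : (Fin k → ℤ) × (Fin k → ℤ)}
    (hq : eraseCoord i q = q) (hqe : q ∈ pairEvent undir M (I₀.erase i))
    (R : (Fin k → ℤ) × (Fin k → ℤ) → Prop) [DecidablePred R] :
    #{p ∈ (pairFinset undir M I₀).filter R | eraseCoord i p = q} =
      #{z ∈ ballSlice undir (M - ∑ j, |q.1 j|) ×ˢ ballSlice undir (M - ∑ j, |q.2 j|) |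
        z.1 ≠ z.2 ∧ R (setCoord i q z)} := by
  refine card_nbij' (fun p => (p.1 i, p.2 i)) (setCoord i q) ?_ ?_ ?_ ?_
  · intro p hp
    simp only [coe_filter, Set.mem_ofPred_eq, mem_filter] at hp
    obtain ⟨⟨hT, hR⟩, rfl⟩ := hp
    rw [mem_pairFinset, ← setCoord_eraseCoord (i := i) p,
      setCoord_mem_pairEvent_iff hi hq] at hT
    exact mem_filter.2 ⟨hT.2.1, hT.2.2, by rwa [setCoord_eraseCoord]⟩
  · intro z hz
    obtain ⟨hzS, hne, hR⟩ := mem_filter.1 hz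
    refine mem_filter.2 ⟨mem_filter.2 ⟨?_, hR⟩, by rw [eraseCoord_setCoord, hq]⟩
    exact mem_pairFinset.2 ((setCoord_mem_pairEvent_iff hi hq z).2 ⟨hqe, hzS, hne⟩)
  · intro p hp
    obtain ⟨-, rfl⟩ := mem_filter.1 hp
    exact setCoord_eraseCoord p
  · rintro z -
    simp

end Pairs

section DivisibilityCount

variable {undir : Bool} {k M : ℕ} {I₀ : Finset (Fin k)} {e : ℕ}

theorem mul_card_filter_dvd_coord_le (he : 0 < e) {i : Fin k} (hi : i ∈ I₀)
    (P : (Fin k → ℤ) × (Fin k → ℤ) → Prop) [DecidablePred P]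
    (hP : ∀ p, P (eraseCoord i p) ↔ P p) :
    e * #{p ∈ pairFinset undir M I₀ | P p ∧ (e : ℤ) ∣ p.1 i - p.2 i} ≤
      #{p ∈ pairFinset undir M I₀ | P p} := by
  set T := pairFinset undir M I₀
  have hmaps : ∀ (R : (Fin k → ℤ) × (Fin k → ℤ) → Prop) [DecidablePred R],
      Set.MapsTo (eraseCoord i) ↑(T.filter R) ↑(T.image (eraseCoord i)) :=
    fun _ _ p hp => mem_image_of_mem _ (mem_filter.1 hp).1
  rw [card_eq_sum_card_fiberwise (hmaps _), card_eq_sum_card_fiberwise (hmaps P), mul_sum]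
  refine sum_le_sum fun q hq => ?_
  obtain ⟨p₀, hp₀, rfl⟩ := mem_image.1 hq
  have hq : eraseCoord i (eraseCoord i p₀) = eraseCoord i p₀ := eraseCoord_eraseCoord p₀
  have hqe : eraseCoord i p₀ ∈ pairEvent undir M (I₀.erase i) := by
    rw [mem_pairFinset, ← setCoord_eraseCoord (i := i) p₀, setCoord_mem_pairEvent_iff hi hq] at hp₀
    exact hp₀.1
  have hPq : ∀ z, P (setCoord i (eraseCoord i p₀) z) ↔ P p₀ := fun z => by
    rw [← hP, eraseCoord_setCoord, hq, hP]
  rw [card_fiber_eraseCoord hi hq hqe, card_fiber_eraseCoord hi hq hqe]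
  simp only [hPq, setCoord_apply_self]
  by_cases hp : P p₀
  · simpa [hp] using mul_card_ballSlice_offDiag_dvd_le he undir _ _
  · simp [hp]

theorem pow_card_mul_card_filter_dvd_le (he : 0 < e) {J : Finset (Fin k)} (hJ : J ⊆ I₀) :
    e ^ #J * #{p ∈ pairFinset undir M I₀ | ∀ j ∈ J, (e : ℤ) ∣ p.1 j - p.2 j} ≤
      #(pairFinset undir M I₀) := by
  induction J using Finset.induction_on with
  | empty => simp
  | insert i J hiJ ih =>
    rw [card_insert_of_notMem hiJ, pow_succ, mul_assoc]
    refine (Nat.mul_le_mul_left _ ?_).trans (ih ((subset_insert i J).trans hJ))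
    simp only [forall_mem_insert, and_comm (a := (e : ℤ) ∣ _)]
    refine mul_card_filter_dvd_coord_le he (hJ (mem_insert_self i J)) _ fun p => ?_
    refine forall₂_congr fun j hj => ?_
    have hji : j ≠ i := ne_of_mem_of_not_mem hj hiJ
    simp [eraseCoord, update_of_ne hji]

theorem card_filter_dvd_mul_pow_le (he : 0 < e) (d : ℕ) :
    (#{p ∈ pairFinset undir M I₀ | ∀ i ∈ I₀, (e : ℤ) ∣ p.1 i - p.2 i} : ℝ) * e ^ d ≤
      #(pairFinset undir M I₀) * (e : ℝ) ^ ((d : ℝ) - #I₀) := by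
  have h := pow_card_mul_card_filter_dvd_le (undir := undir) (M := M) he (subset_refl I₀)
  rw [Real.rpow_sub (by positivity), Real.rpow_natCast, Real.rpow_natCast, mul_div_assoc',
    le_div_iff₀ (by positivity)]
  calc (#{p ∈ pairFinset undir M I₀ | ∀ i ∈ I₀, (e : ℤ) ∣ p.1 i - p.2 i} : ℝ) * e ^ d * e ^ #I₀
      = ((e ^ #I₀ * #{p ∈ pairFinset undir M I₀ | ∀ i ∈ I₀, (e : ℤ) ∣ p.1 i - p.2 i} : ℕ) : ℝ) *
          e ^ d := by push_cast; ring
    _ ≤ #(pairFinset undir M I₀) * e ^ d :=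
        mul_le_mul_of_nonneg_right (by exact_mod_cast h) (by positivity)

end DivisibilityCount

theorem pow_le_one_add_sum_Icc {g N : ℕ} (hg : 0 < g) (hgN : g ≤ N) (Q : ℕ → Prop)
    [DecidablePred Q] (hQ : Q g) (d : ℕ) :
    (g : ℝ) ^ d ≤ 1 + ∑ e ∈ Icc 2 N, if Q e then (e : ℝ) ^ d else 0 := by
  have hterm : ∀ e ∈ Icc 2 N, 0 ≤ if Q e then (e : ℝ) ^ d else 0 := fun e _ => by
    split_ifs <;> positivity
  rcases (Nat.one_le_iff_ne_zero.2 hg.ne').eq_or_lt with rfl | hg1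
  · simpa using sum_nonneg hterm
  · have := single_le_sum hterm (mem_Icc.2 ⟨hg1, hgN⟩)
    rw [if_pos hQ] at this
    linarith

section Expectation

variable {undir : Bool} {k M : ℕ} {I₀ : Finset (Fin k)}

theorem gcdWithN_le_of_mem_pairEvent {p : (Fin k → ℤ) × (Fin k → ℤ)}
    (hp : p ∈ pairEvent undir M I₀) {i : Fin k} (hi : i ∈ I₀) (n : ℕ) :
    gcdWithN (fun j => p.1 j - p.2 j) n ≤ 2 * M := by
  have hne : p.1 i - p.2 i ≠ 0 := sub_ne_zero.2 ((Set.ext_iff.1 hp.2.2 i).2 hi)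
  calc gcdWithN (fun j => p.1 j - p.2 j) n ≤ (p.1 i - p.2 i).natAbs :=
        Nat.le_of_dvd (Int.natAbs_pos.2 hne) (Int.natCast_dvd.1 (gcdWithN_dvd _ _ i))
    _ ≤ (p.1 i).natAbs + (p.2 i).natAbs := Int.natAbs_sub_le _ _
    _ ≤ 2 * M := by linarith [natAbs_le_of_inBall hp.1 i, natAbs_le_of_inBall hp.2.1 i]

theorem sum_gcdWithN_pow_le {n : ℕ} (hn : 0 < n) (hI₀ : I₀.Nonempty) (d : ℕ) :
    ∑ p ∈ pairFinset undir M I₀, (gcdWithN (fun i => p.1 i - p.2 i) n : ℝ) ^ d ≤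
      #(pairFinset undir M I₀) * (1 + ∑ e ∈ Icc 2 (2 * M), (e : ℝ) ^ ((d : ℝ) - #I₀)) := by
  set T := pairFinset undir M I₀
  obtain ⟨i₀, hi₀⟩ := hI₀
  calc ∑ p ∈ T, (gcdWithN (fun i => p.1 i - p.2 i) n : ℝ) ^ d
      ≤ ∑ p ∈ T, (1 + ∑ e ∈ Icc 2 (2 * M),
          if ∀ i ∈ I₀, (e : ℤ) ∣ p.1 i - p.2 i then (e : ℝ) ^ d else 0) :=
        sum_le_sum fun p hp => pow_le_one_add_sum_Icc (Nat.gcd_pos_of_pos_right _ hn)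
          (gcdWithN_le_of_mem_pairEvent (mem_pairFinset.1 hp) hi₀ n) _
          (fun i _ => gcdWithN_dvd _ _ i) d
    _ = #T + ∑ e ∈ Icc 2 (2 * M), (#{p ∈ T | ∀ i ∈ I₀, (e : ℤ) ∣ p.1 i - p.2 i} : ℝ) * e ^ d := by
        rw [sum_add_distrib, sum_comm]
        simp [sum_ite]
    _ ≤ #T + ∑ e ∈ Icc 2 (2 * M), #T * (e : ℝ) ^ ((d : ℝ) - #I₀) :=
        add_le_add le_rfl (sum_le_sum fun e he =>
          card_filter_dvd_mul_pow_le (by have := (mem_Icc.1 he).1; omega) d)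
    _ = _ := by rw [← mul_sum]; ring

end Expectation

theorem sum_Icc_rpow_le_of_neg_one_le {N : ℕ} (hN : 1 ≤ N) {x : ℝ} (hx : -1 ≤ x) :
    ∑ e ∈ Icc 2 N, (e : ℝ) ^ x ≤ (N : ℝ) ^ (x + 2) := by
  calc ∑ e ∈ Icc 2 N, (e : ℝ) ^ x ≤ ∑ e ∈ Icc 2 N, (N : ℝ) ^ (x + 1) := sum_le_sum fun e he => by
        have h1 : (1 : ℝ) ≤ e := by exact_mod_cast (by have := (mem_Icc.1 he).1; omega : 1 ≤ e)
        have h2 : (e : ℝ) ≤ N := by exact_mod_cast (mem_Icc.1 he).2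
        calc (e : ℝ) ^ x ≤ e ^ (x + 1) := Real.rpow_le_rpow_of_exponent_le h1 (by linarith)
          _ ≤ N ^ (x + 1) := Real.rpow_le_rpow (by linarith) h2 (by linarith)
    _ = #(Icc 2 N) * (N : ℝ) ^ (x + 1) := by rw [sum_const, nsmul_eq_mul]
    _ ≤ N * (N : ℝ) ^ (x + 1) := by
        gcongr
        exact_mod_cast (by simp : #(Icc 2 N) ≤ N)
    _ = (N : ℝ) ^ (x + 2) := by
        rw [mul_comm, ← Real.rpow_add_one (by positivity)]
        norm_num [add_assoc]

theorem sum_Icc_rpow_le_of_le_neg_two (N : ℕ) {x : ℝ} (hx : x ≤ -2) :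
    ∑ e ∈ Icc 2 N, (e : ℝ) ^ x ≤ 2 ^ (x + 2) := by
  have hIcc : Icc 2 N = Ioo 1 (N + 1) := by ext; simp; omega
  calc ∑ e ∈ Icc 2 N, (e : ℝ) ^ x ≤ ∑ e ∈ Icc 2 N, 2 ^ (x + 2) * ((e : ℝ) ^ 2)⁻¹ :=
        sum_le_sum fun e he => by
          have h2 : (2 : ℝ) ≤ e := by exact_mod_cast (mem_Icc.1 he).1
          calc (e : ℝ) ^ x = e ^ (x + 2) * ((e : ℝ) ^ 2)⁻¹ := by
                rw [Real.rpow_add (by linarith), Real.rpow_two]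
                field_simp
            _ ≤ 2 ^ (x + 2) * ((e : ℝ) ^ 2)⁻¹ := mul_le_mul_of_nonneg_right
                (Real.rpow_le_rpow_of_nonpos two_pos h2 (by linarith)) (by positivity)
    _ = 2 ^ (x + 2) * ∑ e ∈ Ioo 1 (N + 1), ((e : ℝ) ^ 2)⁻¹ := by rw [← mul_sum, hIcc]
    _ ≤ 2 ^ (x + 2) * 1 := by
        gcongr
        exact (sum_Ioo_inv_sq_le 1 (N + 1)).trans_eq (by norm_num)
    _ = 2 ^ (x + 2) := mul_one _

theorem two_rpow_le_five_mul_three_halves_rpow {y z : ℝ} (hy : y ≤ 0) (hz : y - 2 ≤ z) :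
    (2 : ℝ) ^ y ≤ 5 * (3 / 2) ^ z := by
  have hpos : (0 : ℝ) ≤ (3 / 2) ^ z := by positivity
  calc (2 : ℝ) ^ y ≤ (3 / 2) ^ y := Real.rpow_le_rpow_of_nonpos (by norm_num) (by norm_num) hy
    _ = 9 / 4 * (3 / 2) ^ (y - 2) := by
        rw [Real.rpow_sub (by norm_num), Real.rpow_two]
        ring
    _ ≤ 9 / 4 * (3 / 2) ^ z :=
        mul_le_mul_of_nonneg_left (Real.rpow_le_rpow_of_exponent_le (by norm_num) hz) (by norm_num)
    _ ≤ 5 * (3 / 2) ^ z := by linarith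

section Event

variable {undir : Bool} {k M : ℕ} {I₀ : Finset (Fin k)}

theorem natCard_pairEvent :
    Nat.card {p : (Fin k → ℤ) × (Fin k → ℤ) // p ∈ pairEvent undir M I₀} =
      #(pairFinset undir M I₀) := by
  rw [Nat.card_coe_set_eq, Set.ncard_eq_toFinset_card _ (pairEvent_finite undir M I₀)]
  rfl

theorem tsum_indicator_pairEvent (f : (Fin k → ℤ) × (Fin k → ℤ) → ℝ) :
    ∑' p, (pairEvent undir M I₀).indicator f p = ∑ p ∈ pairFinset undir M I₀, f p := by
  rw [← (pairEvent_finite undir M I₀).coe_toFinset, ← _root_.tsum_subtype]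
  exact Finset.tsum_subtype _ f

end Event

theorem statement16 :
    ∃ C : ℝ, 0 < C ∧
    ∀ (d k M : ℕ), 0 < d → 0 < k → 0 < M →
    ∀ (m : Fin d → ℕ) [∀ j, NeZero (m j)],
      (∀ j, 2 * M < m j) →
      minGenAdd (∀ j, ZMod (m j)) = d →
      ∀ n : ℕ, n = Fintype.card (∀ j, ZMod (m j)) →
      ∀ undir : Bool, ∀ I₀ : Finset (Fin k), I₀.Nonempty →
      ∀ A E P : ℝ,
        A = (Nat.card {p : (Fin k → ℤ) × (Fin k → ℤ) // p ∈ pairEvent undir M I₀} : ℝ) →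
        E = (∑' p : (Fin k → ℤ) × (Fin k → ℤ),
              Set.indicator (pairEvent undir M I₀)
                (fun p => (gcdWithN (fun i => p.1 i - p.2 i) n : ℝ) ^ d) p) / A →
        P = (∑' p : (Fin k → ℤ) × (Fin k → ℤ),
              Set.indicator (pairEvent undir M I₀)
                (fun p => tupleProb (∀ j, ZMod (m j)) k
                  (fun Z => (∑ i, (p.1 i - p.2 i) • Z i) = 0)) p) / A →
        ((n : ℝ) * P ≤ E ∧
          (I₀.card ≤ d + 1 →
            E ≤ C * 2 ^ d * (2 * (M : ℝ)) ^ ((d : ℝ) - (I₀.card : ℝ) + 2)) ∧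
          (d + 2 ≤ I₀.card →
            E ≤ 1 + 5 * (3 / 2 : ℝ) ^ (2 * (d : ℝ) - (I₀.card : ℝ)))) := by
  refine ⟨2, two_pos, ?_⟩
  intro d k M _ _ hM m _ _ _ n hn undir I₀ hI₀ A E P hA hE hP
  rw [natCard_pairEvent] at hA
  rw [tsum_indicator_pairEvent, hA] at hE hP
  set B := ∑ e ∈ Icc 2 (2 * M), (e : ℝ) ^ ((d : ℝ) - #I₀)
  have hn0 : 0 < n := hn ▸ Fintype.card_pos
  have hEB : E ≤ 1 + B := hE ▸ div_le_of_le_mul₀ (by positivity)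
    (add_nonneg zero_le_one (sum_nonneg fun _ _ => by positivity))
    ((sum_gcdWithN_pow_le hn0 hI₀ d).trans_eq (mul_comm _ _))
  refine ⟨?_, fun hs => ?_, fun hs => ?_⟩
  · rw [hP, hE, ← mul_div_assoc, mul_sum]
    gcongr with p
    exact hn ▸ card_mul_tupleProb_le m _
  · have hs' : (#I₀ : ℝ) ≤ d + 1 := by exact_mod_cast hs
    have hB := sum_Icc_rpow_le_of_neg_one_le (by omega : 1 ≤ 2 * M) (x := (d : ℝ) - #I₀)
      (by linarith)
    have h2M : (1 : ℝ) ≤ 2 * M := by norm_cast; omega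
    have hone : (1 : ℝ) ≤ (2 * M) ^ ((d : ℝ) - #I₀ + 2) := Real.one_le_rpow h2M (by linarith)
    have h2d : (1 : ℝ) ≤ 2 ^ d := one_le_pow₀ one_le_two
    push_cast at hB
    calc E ≤ 1 + (2 * M : ℝ) ^ ((d : ℝ) - #I₀ + 2) := by linarith
      _ ≤ 2 * 2 ^ d * (2 * M) ^ ((d : ℝ) - #I₀ + 2) := by nlinarith
  · have hs' : (d : ℝ) + 2 ≤ #I₀ := by exact_mod_cast hs
    have h := two_rpow_le_five_mul_three_halves_rpow (y := d - #I₀ + 2) (z := 2 * d - #I₀)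
      (by linarith) (by linarith [d.cast_nonneg (α := ℝ)])
    linarith [sum_Icc_rpow_le_of_le_neg_two (2 * M) (x := d - #I₀) (by linarith)]
end
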